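/- arXiv:1610.07297 — 14 statements merged into one kernel-verified Lean document; each statement's English description precedes it below -/
import Mathlib

section
/- Let W and V be B-DMCs with the same finite output alphabet Y, and assume V(y|x) > 0 for all y ∈ Y and x ∈ {0,1}. Then the average mismatched ML decoding error probability for a single use of W with equiprobable inputs, decoded by the ML rule of V, satisfies P_{e,ML}(W,V) ≤ min{1 − I(W,V), 1}. -/
open Finset
open scoped Classical

/-- A channel `W : {0,1} → Y` is a B-DMC if each row is a probability mass function. -/
def IsBDMC {Y : Type*} [Fintype Y] (W : Bool → Y → ℝ) : Prop :=
  (∀ x y, 0 ≤ W x y) ∧ (∀ x, ∑ y : Y, W x y = 1)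

/-- The output distribution of a channel under uniform inputs. -/
noncomputable def qOut {Y : Type*} (W : Bool → Y → ℝ) (y : Y) : ℝ :=
  (W false y + W true y) / 2

/-- The Δ parameter of a channel (with the convention 0/0 = 0, automatic in Lean). -/
noncomputable def Δch {Y : Type*} (V : Bool → Y → ℝ) (y : Y) : ℝ :=
  (V false y - V true y) / (V false y + V true y)

/-- The likelihood ratio of a channel. -/
noncomputable def LR {Y : Type*} (V : Bool → Y → ℝ) (y : Y) : ℝ :=
  V true y / V false y

/-- The mismatched mutual information `I(W, V)` (base-2 logarithm). -/
noncomputable def Imm {Y : Type*} [Fintype Y] (W V : Bool → Y → ℝ) : ℝ :=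
  (1/2) * ∑ x : Bool, ∑ y : Y, W x y * Real.logb 2 (V x y / qOut V y)

/-- The mismatched ML decoding error probability `P_{e,ML}(W, V)`. -/
noncomputable def PeML {Y : Type*} [Fintype Y] (W V : Bool → Y → ℝ) : ℝ :=
  (1/2) * ∑ y ∈ univ.filter (fun y => 1 < LR V y), W false y
  + (1/4) * ∑ y ∈ univ.filter (fun y => LR V y = 1), W false y
  + (1/2) * ∑ y ∈ univ.filter (fun y => LR V y < 1), W true y
  + (1/4) * ∑ y ∈ univ.filter (fun y => LR V y = 1), W true y

/-- The mismatched parameter `D(W, V)`. -/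
noncomputable def Dpar {Y : Type*} [Fintype Y] (W V : Bool → Y → ℝ) : ℝ :=
  ∑ y : Y, qOut W y * Real.sqrt |Δch V y|

/-- The mismatched variational distance `T(W, V)`. -/
noncomputable def Tpar {Y : Type*} [Fintype Y] (W V : Bool → Y → ℝ) : ℝ :=
  ∑ y : Y, qOut W y * |Δch V y|

/-- The mismatched parameter `T_k(W, V)`. -/
noncomputable def Tkpar {Y : Type*} [Fintype Y] (k : ℕ) (W V : Bool → Y → ℝ) : ℝ :=
  ∑ y : Y, qOut W y * |Δch V y| ^ k

/-- The mismatched Bhattacharyya parameter `Z(W, V)`. -/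
noncomputable def Zpar {Y : Type*} [Fintype Y] (W V : Bool → Y → ℝ) : ℝ :=
  (1/2) * ∑ y : Y, W false y * Real.sqrt (LR V y)
  + (1/2) * ∑ y : Y, W true y * Real.sqrt (1 / LR V y)

/-- The minus polar transform `W⁻(y₁y₂ | u₁) = (1/2) ∑_{u₂} W(y₁|u₁⊕u₂) W(y₂|u₂)`. -/
noncomputable def polarMinus {Y : Type*} (W : Bool → Y → ℝ) : Bool → Y × Y → ℝ :=
  fun u₁ p => (1/2) * ∑ u₂ : Bool, W (Bool.xor u₁ u₂) p.1 * W u₂ p.2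

/-- The plus polar transform `W⁺(y₁y₂u₁ | u₂) = (1/2) W(y₁|u₁⊕u₂) W(y₂|u₂)`,
with output `(y₁, y₂, u₁)`. -/
noncomputable def polarPlus {Y : Type*} (W : Bool → Y → ℝ) : Bool → Y × Y × Bool → ℝ :=
  fun u₂ p => (1/2) * W (Bool.xor p.2.2 u₂) p.1 * W u₂ p.2.1

/-! Per output symbol, `log₂ (V(y|x) / q_V(y)) ≤ 1` always and `≤ 0` unless `x` is the strict
`V`-ML decision at `y`. Hence `I(W, V)` is at most the probability that the ML rule of `V`
decides correctly with ties counted as errors, so `1 - I(W, V)` bounds the error probability of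
that pessimistic rule, which in turn dominates `P_{e,ML}(W, V)`; the bound by `1` is immediate. -/

lemma logb_div_avg_le {a b : ℝ} (ha : 0 < a) (hb : 0 ≤ b) :
    Real.logb 2 (a / ((a + b) / 2)) ≤ if b < a then 1 else 0 := by
  have hab : 0 < (a + b) / 2 := by positivity
  split_ifs with h
  · rw [Real.logb_le_iff_le_rpow one_lt_two (by positivity), Real.rpow_one, div_le_iff₀ hab]
    linarith
  · exact Real.logb_nonpos one_lt_two (by positivity) ((div_le_one hab).2 (by linarith))

section

variable {Y : Type*} {W V : Bool → Y → ℝ}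

lemma logb_div_qOut_le (hV : ∀ x y, 0 < V x y) (x : Bool) (y : Y) :
    Real.logb 2 (V x y / qOut V y) ≤ if V (!x) y < V x y then 1 else 0 := by
  cases x
  · exact logb_div_avg_le (hV _ _) (hV _ _).le
  · rw [qOut, add_comm]
    exact logb_div_avg_le (hV _ _) (hV _ _).le

variable [Fintype Y]

lemma sum_mul_logb_div_qOut_le (hW : ∀ x y, 0 ≤ W x y) (hV : ∀ x y, 0 < V x y) (x : Bool) :
    ∑ y, W x y * Real.logb 2 (V x y / qOut V y)
      ≤ ∑ y ∈ univ.filter (fun y => V (!x) y < V x y), W x y := by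
  rw [sum_filter]
  gcongr with y
  calc W x y * Real.logb 2 (V x y / qOut V y)
      ≤ W x y * if V (!x) y < V x y then 1 else 0 :=
        mul_le_mul_of_nonneg_left (logb_div_qOut_le hV x y) (hW x y)
    _ = _ := by rw [mul_ite, mul_one, mul_zero]

lemma Imm_le (hW : ∀ x y, 0 ≤ W x y) (hV : ∀ x y, 0 < V x y) :
    Imm W V ≤ (1/2) * ∑ y ∈ univ.filter (fun y => LR V y < 1), W false y
      + (1/2) * ∑ y ∈ univ.filter (fun y => 1 < LR V y), W true y := by
  have hlt (y : Y) : LR V y < 1 ↔ V true y < V false y := div_lt_one (hV false y)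
  have hgt (y : Y) : 1 < LR V y ↔ V false y < V true y := one_lt_div (hV false y)
  have hfalse := sum_mul_logb_div_qOut_le hW hV false
  have htrue := sum_mul_logb_div_qOut_le hW hV true
  simp only [Bool.not_false, Bool.not_true] at hfalse htrue
  simp only [Imm, Fintype.sum_bool, hlt, hgt]
  linarith

/-- The error probability of the ML rule of `V` when every tie `LR V y = 1` is lost. -/
noncomputable def PeMLTiesLost (W V : Bool → Y → ℝ) : ℝ :=
  (1/2) * ∑ y ∈ univ.filter (fun y => 1 ≤ LR V y), W false y
  + (1/2) * ∑ y ∈ univ.filter (fun y => LR V y ≤ 1), W true y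

lemma PeML_le_PeMLTiesLost (hW : ∀ x y, 0 ≤ W x y) : PeML W V ≤ PeMLTiesLost W V := by
  simp only [PeML, PeMLTiesLost, sum_filter, mul_sum, ← sum_add_distrib]
  refine sum_le_sum fun y _ => ?_
  have := hW false y
  have := hW true y
  rcases lt_trichotomy (LR V y) 1 with h | h | h
  · simp [h, h.le, h.ne, not_lt.2 h.le, not_le.2 h]
  · simp [h]; linarith
  · simp [h, h.le, h.ne', not_lt.2 h.le, not_le.2 h]

lemma PeMLTiesLost_le_one (hW : IsBDMC W) : PeMLTiesLost W V ≤ 1 := by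
  have h (x : Bool) (p : Y → Prop) [DecidablePred p] : ∑ y ∈ univ.filter p, W x y ≤ 1 :=
    hW.2 x ▸ sum_le_sum_of_subset_of_nonneg (filter_subset _ _) fun y _ _ => hW.1 x y
  rw [PeMLTiesLost]
  linarith [h false (fun y => 1 ≤ LR V y), h true (fun y => LR V y ≤ 1)]

lemma PeMLTiesLost_le_one_sub_Imm (hW : IsBDMC W) (hV : ∀ x y, 0 < V x y) :
    PeMLTiesLost W V ≤ 1 - Imm W V := by
  have hfalse := sum_filter_add_sum_filter_not univ (fun y => LR V y < 1) (W false)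
  have htrue := sum_filter_add_sum_filter_not univ (fun y => 1 < LR V y) (W true)
  simp only [not_lt, hW.2] at hfalse htrue
  rw [PeMLTiesLost]
  linarith [Imm_le hW.1 hV]

end

theorem peML_le_min_one_sub_Imm_general {Y : Type*} [Fintype Y] (W V : Bool → Y → ℝ)
    (hW : IsBDMC W) (hVpos : ∀ x y, 0 < V x y) :
    PeML W V ≤ min (1 - Imm W V) 1 :=
  le_min ((PeML_le_PeMLTiesLost hW.1).trans (PeMLTiesLost_le_one_sub_Imm hW hVpos))
    ((PeML_le_PeMLTiesLost hW.1).trans (PeMLTiesLost_le_one hW))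

/-- `P_{e,ML}(W, V) ≤ min {1 − I(W, V), 1}`. -/
theorem peML_le_min_one_sub_Imm {Y : Type*} [Fintype Y] (W V : Bool → Y → ℝ)
    (hW : IsBDMC W) (hV : IsBDMC V) (hVpos : ∀ x y, 0 < V x y) :
    PeML W V ≤ min (1 - Imm W V) 1 :=
  peML_le_min_one_sub_Imm_general W V hW hVpos
end

section
/- Let W and V be B-DMCs with the same finite output alphabet Y, and assume W(y|x) > 0 and V(y|x) > 0 for all y ∈ Y and x ∈ {0,1}. Then I(W) ≥ I(W,V), where I(W) := I(W,W) is the symmetric capacity of W. -/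
open Finset
open scoped Classical

/-! The gap `I(W) - I(W,V)` is, up to the factor `1 / (2 log 2)`, the Kullback–Leibler divergence
from the joint law `W(y|x)` to the law `V(y|x) q_W(y) / q_V(y)`, which has the same total mass 2
because its `y`-marginal is `2 q_W(y)`; Gibbs' inequality makes it nonnegative. -/

theorem Real.sub_le_mul_log_div {p q : ℝ} (hp : 0 ≤ p) (hq : 0 ≤ q) (hpq : q = 0 → p = 0) :
    p - q ≤ p * Real.log (p / q) := by
  rcases hq.eq_or_lt with rfl | hq
  · simp [hpq rfl]
  have h := mul_le_mul_of_nonneg_left (Real.self_sub_one_le_mul_log (div_nonneg hp hq.le)) hq.le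
  rwa [mul_sub, mul_div_cancel₀ _ hq.ne', mul_one, ← mul_assoc, mul_div_cancel₀ _ hq.ne'] at h

theorem Finset.sum_mul_log_div_nonneg {ι : Type*} (s : Finset ι) {p q : ι → ℝ}
    (hp : ∀ i ∈ s, 0 ≤ p i) (hq : ∀ i ∈ s, 0 ≤ q i) (hpq : ∀ i ∈ s, q i = 0 → p i = 0)
    (hsum : ∑ i ∈ s, p i = ∑ i ∈ s, q i) :
    0 ≤ ∑ i ∈ s, p i * Real.log (p i / q i) :=
  calc 0 = ∑ i ∈ s, (p i - q i) := by rw [sum_sub_distrib, hsum, sub_self]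
    _ ≤ _ := sum_le_sum fun i hi => Real.sub_le_mul_log_div (hp i hi) (hq i hi) (hpq i hi)

noncomputable def outputReweight {Y : Type*} (W V : Bool → Y → ℝ) (x : Bool) (y : Y) : ℝ :=
  V x y * qOut W y / qOut V y

section Channels

variable {Y : Type*} {W V : Bool → Y → ℝ}

theorem qOut_pos (hV : ∀ x y, 0 < V x y) (y : Y) : 0 < qOut V y := by
  unfold qOut; linarith [hV false y, hV true y]

theorem qOut_nonneg (hW : ∀ x y, 0 ≤ W x y) (y : Y) : 0 ≤ qOut W y := by
  unfold qOut; linarith [hW false y, hW true y]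

theorem qOut_pos_of_pos (hW : ∀ x y, 0 ≤ W x y) {x : Bool} {y : Y} (hxy : 0 < W x y) :
    0 < qOut W y := by
  unfold qOut; cases x <;> linarith [hW false y, hW true y]

theorem outputReweight_nonneg (hW : ∀ x y, 0 ≤ W x y) (hV : ∀ x y, 0 < V x y) (x : Bool) (y : Y) :
    0 ≤ outputReweight W V x y :=
  div_nonneg (mul_nonneg (hV x y).le (qOut_nonneg hW y)) (qOut_pos hV y).le

theorem eq_zero_of_outputReweight_eq_zero (hW : ∀ x y, 0 ≤ W x y) (hV : ∀ x y, 0 < V x y)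
    {x : Bool} {y : Y} (h : outputReweight W V x y = 0) : W x y = 0 := by
  by_contra hne
  have hq := qOut_pos_of_pos hW ((hW x y).lt_of_ne' hne)
  exact (div_pos (mul_pos (hV x y) hq) (qOut_pos hV y)).ne' h

theorem sum_bool_outputReweight (hV : ∀ x y, 0 < V x y) (y : Y) :
    ∑ x : Bool, outputReweight W V x y = ∑ x : Bool, W x y := by
  have : V false y + V true y ≠ 0 := by linarith [hV false y, hV true y]
  simp only [Fintype.sum_bool, outputReweight, qOut]
  field_simp
  ring

theorem mul_logb_sub_mul_logb (hW : ∀ x y, 0 ≤ W x y) (hV : ∀ x y, 0 < V x y) (x : Bool) (y : Y) :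
    W x y * Real.logb 2 (W x y / qOut W y) - W x y * Real.logb 2 (V x y / qOut V y)
      = W x y * Real.log (W x y / outputReweight W V x y) / Real.log 2 := by
  rcases (hW x y).eq_or_lt with h0 | hpos
  · simp [← h0]
  have hqW := (qOut_pos_of_pos hW hpos).ne'
  have hqV := (qOut_pos hV y).ne'
  have hVxy := (hV x y).ne'
  simp only [Real.logb, outputReweight]
  rw [Real.log_div hpos.ne' hqW, Real.log_div hVxy hqV, Real.log_div hpos.ne' (by positivity),
    Real.log_div (by positivity) hqV, Real.log_mul hVxy hqW]
  ring

theorem Imm_sub_Imm [Fintype Y] (hW : ∀ x y, 0 ≤ W x y) (hV : ∀ x y, 0 < V x y) :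
    Imm W W - Imm W V = (∑ p : Bool × Y,
      W p.1 p.2 * Real.log (W p.1 p.2 / outputReweight W V p.1 p.2)) / (2 * Real.log 2) := by
  rw [Fintype.sum_prod_type]
  simp only [Imm, ← mul_sub, ← sum_sub_distrib, mul_logb_sub_mul_logb hW hV, ← sum_div]
  ring

theorem sum_prod_outputReweight [Fintype Y] (hV : ∀ x y, 0 < V x y) :
    ∑ p : Bool × Y, outputReweight W V p.1 p.2 = ∑ p : Bool × Y, W p.1 p.2 := by
  simp only [Fintype.sum_prod_type_right', sum_bool_outputReweight hV]

end Channels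

theorem Imm_matched_ge_Imm_general {Y : Type*} [Fintype Y] (W V : Bool → Y → ℝ)
    (hW : IsBDMC W) (hVpos : ∀ x y, 0 < V x y) :
    Imm W W ≥ Imm W V := by
  have hKL : 0 ≤ ∑ p : Bool × Y,
      W p.1 p.2 * Real.log (W p.1 p.2 / outputReweight W V p.1 p.2) :=
    sum_mul_log_div_nonneg _ (fun p _ => hW.1 p.1 p.2)
      (fun p _ => outputReweight_nonneg hW.1 hVpos p.1 p.2)
      (fun _ _ => eq_zero_of_outputReweight_eq_zero hW.1 hVpos)
      (sum_prod_outputReweight hVpos).symm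
  rw [ge_iff_le, ← sub_nonneg, Imm_sub_Imm hW.1 hVpos]
  exact div_nonneg hKL (by positivity)

/-- `I(W) ≥ I(W, V)`. -/
theorem Imm_matched_ge_Imm {Y : Type*} [Fintype Y] (W V : Bool → Y → ℝ)
    (hW : IsBDMC W) (hV : IsBDMC V)
    (hWpos : ∀ x y, 0 < W x y) (hVpos : ∀ x y, 0 < V x y) :
    Imm W W ≥ Imm W V :=
  Imm_matched_ge_Imm_general W V hW hVpos
end

section
/- Let W and V be B-DMCs with the same finite output alphabet Y, and assume V(y|x) > 0 for all y ∈ Y and x ∈ {0,1}. Then I(W,V) ≤ D(W,V)/ln 2. -/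
open Finset
open scoped Classical

/-! Writing `Δ = Δ_V(y)`, one has `V(y|0)/q_V(y) = 1 + Δ` and `V(y|1)/q_V(y) = 1 - Δ`, so
`log t ≤ t - 1` bounds the contribution of `y` to `I(W,V) ln 2` by `(W(y|0) - W(y|1)) Δ / 2`,
which is at most `q_W(y) |Δ| ≤ q_W(y) √|Δ|` because `|Δ| ≤ 1`. -/

section

variable {Y : Type*}

theorem abs_Δch_le_one {V : Bool → Y → ℝ} {y : Y} (h₀ : 0 ≤ V false y)
    (h₁ : 0 ≤ V true y) :
    |Δch V y| ≤ 1 := by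
  rw [Δch, abs_div, abs_of_nonneg (add_nonneg h₀ h₁)]
  exact div_le_one_of_le₀ (abs_le.mpr ⟨by linarith, by linarith⟩) (add_nonneg h₀ h₁)

theorem div_qOut_false {V : Bool → Y → ℝ} {y : Y} (h : V false y + V true y ≠ 0) :
    V false y / qOut V y = 1 + Δch V y := by
  rw [qOut, Δch]
  field_simp
  ring

theorem div_qOut_true {V : Bool → Y → ℝ} {y : Y} (h : V false y + V true y ≠ 0) :
    V true y / qOut V y = 1 - Δch V y := by
  rw [qOut, Δch]
  field_simp
  ring

theorem sum_mul_log_div_qOut_le {W V : Bool → Y → ℝ} {y : Y} (hW : ∀ x, 0 ≤ W x y)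
    (hV : ∀ x, 0 < V x y) :
    ∑ x : Bool, W x y * Real.log (V x y / qOut V y) ≤ (W false y - W true y) * Δch V y := by
  have hq : 0 < qOut V y := by rw [qOut]; linarith [hV false, hV true]
  have hlog (x : Bool) : W x y * Real.log (V x y / qOut V y) ≤ W x y * (V x y / qOut V y - 1) :=
    mul_le_mul_of_nonneg_left (Real.log_le_sub_one_of_pos (div_pos (hV x) hq)) (hW x)
  have hne : V false y + V true y ≠ 0 := by linarith [hV false, hV true]
  rw [Fintype.sum_bool]
  calc W true y * Real.log (V true y / qOut V y) + W false y * Real.log (V false y / qOut V y)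
      ≤ W true y * (V true y / qOut V y - 1) + W false y * (V false y / qOut V y - 1) :=
        add_le_add (hlog true) (hlog false)
    _ = (W false y - W true y) * Δch V y := by
        rw [div_qOut_true hne, div_qOut_false hne]; ring

theorem sub_mul_Δch_div_two_le_qOut_mul_sqrt {W V : Bool → Y → ℝ} {y : Y}
    (hW : ∀ x, 0 ≤ W x y) (hΔ : |Δch V y| ≤ 1) :
    (W false y - W true y) * Δch V y / 2 ≤ qOut W y * √|Δch V y| := by
  have hqW : 0 ≤ qOut W y := by rw [qOut]; linarith [hW false, hW true]
  calc (W false y - W true y) * Δch V y / 2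
      ≤ |(W false y - W true y) * Δch V y| / 2 := by gcongr; exact le_abs_self _
    _ = |W false y - W true y| / 2 * |Δch V y| := by rw [abs_mul]; ring
    _ ≤ qOut W y * |Δch V y| := by
        gcongr
        rw [qOut]
        gcongr
        exact abs_le.mpr ⟨by linarith [hW false], by linarith [hW true]⟩
    _ ≤ qOut W y * √|Δch V y| := by gcongr; exact Real.le_sqrt_self_iff.mpr hΔ

theorem Imm_eq_sum_div_log_two [Fintype Y] (W V : Bool → Y → ℝ) :
    Imm W V = (∑ y, (∑ x : Bool, W x y * Real.log (V x y / qOut V y)) / 2) / Real.log 2 := by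
  simp only [Imm, Real.logb, Finset.sum_div, Finset.mul_sum]
  rw [Finset.sum_comm]
  refine Finset.sum_congr rfl fun y _ => Finset.sum_congr rfl fun x _ => ?_
  ring

end

theorem Imm_le_Dpar_div_log_two_general {Y : Type*} [Fintype Y] (W V : Bool → Y → ℝ)
    (hW : IsBDMC W) (hVpos : ∀ x y, 0 < V x y) :
    Imm W V ≤ Dpar W V / Real.log 2 := by
  rw [Imm_eq_sum_div_log_two, div_le_div_iff_of_pos_right (Real.log_pos one_lt_two), Dpar]
  refine Finset.sum_le_sum fun y _ => ?_
  have hWy (x : Bool) : 0 ≤ W x y := hW.1 x y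
  have hΔ : |Δch V y| ≤ 1 := abs_Δch_le_one (hVpos false y).le (hVpos true y).le
  calc (∑ x : Bool, W x y * Real.log (V x y / qOut V y)) / 2
      ≤ (W false y - W true y) * Δch V y / 2 := by
        gcongr; exact sum_mul_log_div_qOut_le hWy (hVpos · y)
    _ ≤ qOut W y * √|Δch V y| := sub_mul_Δch_div_two_le_qOut_mul_sqrt hWy hΔ

/-- `I(W, V) ≤ D(W, V) / ln 2`. -/
theorem Imm_le_Dpar_div_log_two {Y : Type*} [Fintype Y] (W V : Bool → Y → ℝ)
    (hW : IsBDMC W) (hV : IsBDMC V) (hVpos : ∀ x y, 0 < V x y) :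
    Imm W V ≤ Dpar W V / Real.log 2 :=
  Imm_le_Dpar_div_log_two_general W V hW hVpos
end

section
/- Let W and V be B-DMCs with the same finite output alphabet Y, and assume V(y|x) > 0 for all y ∈ Y and x ∈ {0,1}. Then the mismatched ML decoding error probability satisfies P_{e,ML}(W,V) ≤ Z(W,V). -/
open Finset
open scoped Classical

/-- The conditional probability that the decoder matched to `V` errs, given that it observed a
likelihood ratio `l` in favour of the wrong input: it errs for `l > 1` and with probability `1/2`
on a tie. -/
noncomputable def mlErrorWeight (l : ℝ) : ℝ :=
  (if 1 < l then 1 else 0) + if l = 1 then 1 / 2 else 0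

theorem mlErrorWeight_le_sqrt (l : ℝ) : mlErrorWeight l ≤ Real.sqrt l := by
  unfold mlErrorWeight
  rcases lt_trichotomy l 1 with hl | rfl | hl
  · simp [hl.not_gt, hl.ne, Real.sqrt_nonneg]
  · norm_num
  · simpa [hl, hl.ne'] using hl.le

theorem PeML_eq_sum_mlErrorWeight {Y : Type*} [Fintype Y] (W V : Bool → Y → ℝ)
    (hLR : ∀ y, 0 < LR V y) :
    PeML W V = (1/2) * ∑ y, W false y * mlErrorWeight (LR V y)
      + (1/2) * ∑ y, W true y * mlErrorWeight (1 / LR V y) := by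
  have hinv : ∀ y, mlErrorWeight (1 / LR V y)
      = (if LR V y < 1 then 1 else 0) + if LR V y = 1 then 1 / 2 else 0 := fun y => by
    simp only [mlErrorWeight, one_lt_div (hLR y), div_eq_one_iff_eq (hLR y).ne', eq_comm]
  simp only [hinv]
  simp only [PeML, mlErrorWeight, Finset.sum_filter, mul_add, mul_ite, mul_one, mul_zero,
    Finset.sum_add_distrib, Finset.mul_sum]
  ring_nf

theorem peML_le_Zpar_general {Y : Type*} [Fintype Y] (W V : Bool → Y → ℝ)
    (hW : IsBDMC W) (hVpos : ∀ x y, 0 < V x y) :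
    PeML W V ≤ Zpar W V := by
  have hLR : ∀ y, 0 < LR V y := fun y => div_pos (hVpos true y) (hVpos false y)
  rw [PeML_eq_sum_mlErrorWeight W V hLR, Zpar]
  gcongr with y _ y _
  · exact hW.1 false y
  · exact mlErrorWeight_le_sqrt _
  · exact hW.1 true y
  · exact mlErrorWeight_le_sqrt _

/-- `P_{e,ML}(W, V) ≤ Z(W, V)`. -/
theorem peML_le_Zpar {Y : Type*} [Fintype Y] (W V : Bool → Y → ℝ)
    (hW : IsBDMC W) (hV : IsBDMC V) (hVpos : ∀ x y, 0 < V x y) :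
    PeML W V ≤ Zpar W V :=
  peML_le_Zpar_general W V hW hVpos
end

section
/- Let W and V be B-DMCs with the same finite output alphabet Y, and assume V(y|x) > 0 for all y ∈ Y and x ∈ {0,1}. Then D(W,V) + Z(W,V) ≥ 1. -/
open Finset
open scoped Classical

/-!
Pointwise in `y`, with `a = V(y|0)`, `b = V(y|1)` and `t = √(b/a)`, one has
`√(|a - b|/(a + b)) + t ≥ 1`: this is trivial when `t ≥ 1`, and for `t < 1` it follows from
`(a - b) - (1 - t)²(a + b) = a t (1 - t)(2 - t + t²) ≥ 0`. The same bound holds with `a`, `b`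
swapped, and averaging the two with weights `W(y|0)/2`, `W(y|1)/2` gives
`q_W(y) ≤ q_W(y) √|Δ_V(y)| + (W(y|0) √L_V(y) + W(y|1) / √L_V(y))/2`. Summing over `y` and using
`∑ q_W = 1` proves the theorem.
-/

theorem one_le_sqrt_abs_sub_div_add_add_sqrt_div {a b : ℝ} (ha : 0 < a) (hb : 0 ≤ b) :
    1 ≤ √(|a - b| / (a + b)) + √(b / a) := by
  set t := √(b / a)
  have ht : 0 ≤ t := Real.sqrt_nonneg _
  have hb_eq : b = a * t ^ 2 := by
    rw [Real.sq_sqrt (by positivity)]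
    field_simp
  rcases le_or_gt 1 t with h1t | ht1
  · linarith [Real.sqrt_nonneg (|a - b| / (a + b))]
  · have hba : b < a :=
      calc b = a * t ^ 2 := hb_eq
        _ < a * 1 := by gcongr; exact pow_lt_one₀ ht ht1 two_ne_zero
        _ = a := mul_one a
    have hsq : (1 - t) ^ 2 ≤ |a - b| / (a + b) := by
      rw [abs_of_pos (sub_pos.mpr hba), le_div_iff₀ (by positivity), hb_eq]
      nlinarith [mul_nonneg (mul_nonneg ha.le ht)
        (mul_nonneg (sub_nonneg.mpr ht1.le) (by nlinarith : (0 : ℝ) ≤ 2 - t + t ^ 2))]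
    linarith [(Real.le_sqrt' (sub_pos.mpr ht1)).mpr hsq]

section Channel

variable {Y : Type*}

theorem sum_qOut_eq_one [Fintype Y] {W : Bool → Y → ℝ} (hW : IsBDMC W) : ∑ y, qOut W y = 1 := by
  simp only [qOut]
  rw [← Finset.sum_div, Finset.sum_add_distrib, hW.2 false, hW.2 true]
  norm_num

theorem abs_Δch_eq {V : Bool → Y → ℝ} {y : Y} (h0 : 0 < V false y) (h1 : 0 < V true y) :
    |Δch V y| = |V false y - V true y| / (V false y + V true y) := by
  rw [Δch, abs_div, abs_of_pos (add_pos h0 h1)]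

theorem qOut_le_mul_sqrt_abs_Δch_add_sqrt_LR {W V : Bool → Y → ℝ} {y : Y}
    (hW0 : 0 ≤ W false y) (hW1 : 0 ≤ W true y) (hV0 : 0 < V false y) (hV1 : 0 < V true y) :
    qOut W y ≤ qOut W y * √|Δch V y|
      + (1 / 2 * (W false y * √(LR V y)) + 1 / 2 * (W true y * √(1 / LR V y))) := by
  have h0 := one_le_sqrt_abs_sub_div_add_add_sqrt_div hV0 hV1.le
  have h1 := one_le_sqrt_abs_sub_div_add_add_sqrt_div hV1 hV0.le
  rw [abs_sub_comm, add_comm (V true y)] at h1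
  rw [abs_Δch_eq hV0 hV1, LR, one_div_div, qOut]
  linarith [mul_le_mul_of_nonneg_left h0 hW0, mul_le_mul_of_nonneg_left h1 hW1]

end Channel

theorem Dpar_add_Zpar_ge_one_general {Y : Type*} [Fintype Y] (W V : Bool → Y → ℝ)
    (hW : IsBDMC W) (hVpos : ∀ x y, 0 < V x y) :
    Dpar W V + Zpar W V ≥ 1 := by
  have hsplit : Dpar W V + Zpar W V = ∑ y, (qOut W y * √|Δch V y|
      + (1 / 2 * (W false y * √(LR V y)) + 1 / 2 * (W true y * √(1 / LR V y)))) := by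
    rw [Dpar, Zpar, Finset.sum_add_distrib, Finset.sum_add_distrib, Finset.mul_sum, Finset.mul_sum]
  rw [ge_iff_le, hsplit]
  exact (sum_qOut_eq_one hW).ge.trans <| Finset.sum_le_sum fun y _ =>
    qOut_le_mul_sqrt_abs_Δch_add_sqrt_LR (hW.1 false y) (hW.1 true y) (hVpos false y) (hVpos true y)

/-- `D(W, V) + Z(W, V) ≥ 1`. -/
theorem Dpar_add_Zpar_ge_one {Y : Type*} [Fintype Y] (W V : Bool → Y → ℝ)
    (hW : IsBDMC W) (hV : IsBDMC V) (hVpos : ∀ x y, 0 < V x y) :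
    Dpar W V + Zpar W V ≥ 1 :=
  Dpar_add_Zpar_ge_one_general W V hW hVpos
end

section
/- For every real x > 0, |tanh(ln x)| + x ≥ 1. -/
open Finset
open scoped Classical

theorem Real.tanh_log {x : ℝ} (hx : 0 < x) :
    Real.tanh (Real.log x) = (x ^ 2 - 1) / (x ^ 2 + 1) := by
  rw [Real.tanh_eq, Real.exp_neg, Real.exp_log hx]
  field_simp

-- `(1 - x²)/(1 + x²) - (1 - x) = x (1 - x)² / (1 + x²)`.
theorem one_sub_le_one_sub_sq_div_one_add_sq {x : ℝ} (hx : 0 ≤ x) :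
    1 - x ≤ (1 - x ^ 2) / (1 + x ^ 2) := by
  rw [le_div_iff₀ (by positivity)]
  nlinarith [mul_nonneg hx (sq_nonneg (1 - x))]

/-- For every real `x > 0`, `|tanh (ln x)| + x ≥ 1`. -/
theorem abs_tanh_log_add_self_ge_one (x : ℝ) (hx : 0 < x) :
    |Real.tanh (Real.log x)| + x ≥ 1 := by
  have h : 1 - x ≤ -Real.tanh (Real.log x) := calc
    1 - x ≤ (1 - x ^ 2) / (1 + x ^ 2) := one_sub_le_one_sub_sq_div_one_add_sq hx.le
    _ = -Real.tanh (Real.log x) := by rw [Real.tanh_log hx]; ring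
  linarith [neg_le_abs (Real.tanh (Real.log x))]
end

section
/- Let W and V be B-DMCs with the same finite output alphabet Y, and assume V(y|x) > 0 for all y ∈ Y and x ∈ {0,1}. Then the minus polar transform satisfies D(W⁻, V⁻) = D(W,V)². -/
open Finset
open scoped Classical

/-
The sum and the difference of the two rows of `V⁻` at `(y₁, y₂)` are half the products of
the sums, resp. differences, of the rows of `V` at `y₁` and `y₂`; so `q` and `Δ` are
multiplicative under the minus transform. The summand of `D(W⁻, V⁻)` at `(y₁, y₂)` is then
the product of the summands of `D(W, V)` at `y₁` and `y₂`, and summing over `Y × Y` gives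
the square.
-/
section PolarMinus

variable {Y : Type*}

lemma qOut_polarMinus (W : Bool → Y → ℝ) (y₁ y₂ : Y) :
    qOut (polarMinus W) (y₁, y₂) = qOut W y₁ * qOut W y₂ := by
  simp only [qOut, polarMinus, Fintype.sum_bool, Bool.xor_false, Bool.xor_true, Bool.not_false,
    Bool.not_true]
  ring

lemma polarMinus_sub (V : Bool → Y → ℝ) (y₁ y₂ : Y) :
    polarMinus V false (y₁, y₂) - polarMinus V true (y₁, y₂)
      = (V false y₁ - V true y₁) * (V false y₂ - V true y₂) / 2 := by
  simp only [polarMinus, Fintype.sum_bool, Bool.xor_false, Bool.xor_true, Bool.not_false,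
    Bool.not_true]
  ring

lemma polarMinus_add (V : Bool → Y → ℝ) (y₁ y₂ : Y) :
    polarMinus V false (y₁, y₂) + polarMinus V true (y₁, y₂)
      = (V false y₁ + V true y₁) * (V false y₂ + V true y₂) / 2 := by
  simp only [polarMinus, Fintype.sum_bool, Bool.xor_false, Bool.xor_true, Bool.not_false,
    Bool.not_true]
  ring

lemma Δch_polarMinus (V : Bool → Y → ℝ) (y₁ y₂ : Y) :
    Δch (polarMinus V) (y₁, y₂) = Δch V y₁ * Δch V y₂ := by
  rw [Δch, polarMinus_sub, polarMinus_add, div_div_div_cancel_right₀ two_ne_zero,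
    Δch, Δch, div_mul_div_comm]

end PolarMinus

theorem Dpar_polarMinus_general {Y : Type*} [Fintype Y] (W V : Bool → Y → ℝ) :
    Dpar (polarMinus W) (polarMinus V) = Dpar W V ^ 2 := by
  have summand_polarMinus (y₁ y₂ : Y) :
      qOut (polarMinus W) (y₁, y₂) * Real.sqrt |Δch (polarMinus V) (y₁, y₂)|
        = (qOut W y₁ * Real.sqrt |Δch V y₁|) * (qOut W y₂ * Real.sqrt |Δch V y₂|) := by
    rw [qOut_polarMinus, Δch_polarMinus, abs_mul, Real.sqrt_mul (abs_nonneg _)]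
    ring
  rw [Dpar, Fintype.sum_prod_type, sq, Dpar, Fintype.sum_mul_sum]
  simp only [summand_polarMinus]

/-- `D(W⁻, V⁻) = D(W, V)²`. -/
theorem Dpar_polarMinus {Y : Type*} [Fintype Y] (W V : Bool → Y → ℝ)
    (hW : IsBDMC W) (hV : IsBDMC V) (hVpos : ∀ x y, 0 < V x y) :
    Dpar (polarMinus W) (polarMinus V) = Dpar W V ^ 2 :=
  Dpar_polarMinus_general W V
end

section
/- Let W and V be B-DMCs with the same finite output alphabet Y, and assume V(y|x) > 0 for all y ∈ Y and x ∈ {0,1}. Then the plus polar transform satisfies Z(W⁺, V⁺) = Z(W,V)². -/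
open Finset
open scoped Classical

/-!
Writing `A = ∑ W(y|0) √L_V(y)` and `B = ∑ W(y|1) / √L_V(y)`, so that `Z(W, V) = (A + B) / 2`,
the likelihood ratio of `V⁺` at `(y₁, y₂, u₁)` is `L_V(y₁)^{±1} · L_V(y₂)`, the sign given by `u₁`.
Its square root therefore factors, the sum over `y₁` and `u₁` collapses to `A + B`,
and the two halves of `Z(W⁺, V⁺)` become `(A + B) A / 2` and `(A + B) B / 2`.
-/

noncomputable def ZparFalse {Y : Type*} [Fintype Y] (W V : Bool → Y → ℝ) : ℝ :=
  ∑ y : Y, W false y * Real.sqrt (LR V y)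

noncomputable def ZparTrue {Y : Type*} [Fintype Y] (W V : Bool → Y → ℝ) : ℝ :=
  ∑ y : Y, W true y * Real.sqrt (1 / LR V y)

section PolarPlus

variable {Y : Type*} (W V : Bool → Y → ℝ)

theorem Zpar_eq_half_add [Fintype Y] : Zpar W V = (ZparFalse W V + ZparTrue W V) / 2 := by
  rw [Zpar, ZparFalse, ZparTrue]
  ring

theorem LR_polarPlus_false (y₁ y₂ : Y) :
    LR (polarPlus V) (y₁, y₂, false) = LR V y₁ * LR V y₂ := by
  simp only [LR, polarPlus, Bool.xor_false, Bool.xor_true, Bool.not_false]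
  rw [mul_assoc, mul_assoc, mul_div_mul_left _ _ (by norm_num), mul_div_mul_comm]

theorem LR_polarPlus_true (y₁ y₂ : Y) :
    LR (polarPlus V) (y₁, y₂, true) = (LR V y₁)⁻¹ * LR V y₂ := by
  simp only [LR, polarPlus, Bool.xor_false, Bool.xor_true, Bool.not_true, inv_div]
  rw [mul_assoc, mul_assoc, mul_div_mul_left _ _ (by norm_num), mul_div_mul_comm]

variable {V}

theorem LR_nonneg (hV : ∀ x y, 0 ≤ V x y) (y : Y) : 0 ≤ LR V y :=
  div_nonneg (hV true y) (hV false y)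

theorem sqrt_LR_polarPlus_false (hV : ∀ x y, 0 ≤ V x y) (y₁ y₂ : Y) :
    Real.sqrt (LR (polarPlus V) (y₁, y₂, false)) = Real.sqrt (LR V y₁) * Real.sqrt (LR V y₂) := by
  rw [LR_polarPlus_false, Real.sqrt_mul (LR_nonneg hV y₁)]

theorem sqrt_LR_polarPlus_true (hV : ∀ x y, 0 ≤ V x y) (y₁ y₂ : Y) :
    Real.sqrt (LR (polarPlus V) (y₁, y₂, true))
      = (Real.sqrt (LR V y₁))⁻¹ * Real.sqrt (LR V y₂) := by
  rw [LR_polarPlus_true, Real.sqrt_mul (inv_nonneg.2 (LR_nonneg hV y₁)), Real.sqrt_inv]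

variable [Fintype Y]

theorem ZparFalse_polarPlus (hV : ∀ x y, 0 ≤ V x y) :
    ZparFalse (polarPlus W) (polarPlus V)
      = (ZparFalse W V + ZparTrue W V) * ZparFalse W V / 2 := by
  simp only [ZparFalse, ZparTrue, Fintype.sum_prod_type, Fintype.sum_bool, ← sum_add_distrib,
    sum_mul_sum, sum_div]
  refine sum_congr rfl fun y₁ _ => sum_congr rfl fun y₂ _ => ?_
  simp only [sqrt_LR_polarPlus_false hV, sqrt_LR_polarPlus_true hV, polarPlus, one_div,
    Real.sqrt_inv, Bool.xor_false]
  ring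

theorem ZparTrue_polarPlus (hV : ∀ x y, 0 ≤ V x y) :
    ZparTrue (polarPlus W) (polarPlus V)
      = (ZparFalse W V + ZparTrue W V) * ZparTrue W V / 2 := by
  simp only [ZparFalse, ZparTrue, Fintype.sum_prod_type, Fintype.sum_bool, ← sum_add_distrib,
    sum_mul_sum, sum_div, one_div, Real.sqrt_inv]
  refine sum_congr rfl fun y₁ _ => sum_congr rfl fun y₂ _ => ?_
  simp only [sqrt_LR_polarPlus_false hV, sqrt_LR_polarPlus_true hV, polarPlus, mul_inv,
    inv_inv, Bool.xor_true, Bool.not_false, Bool.not_true]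
  ring

end PolarPlus

theorem Zpar_polarPlus_general {Y : Type*} [Fintype Y] (W V : Bool → Y → ℝ)
    (hVpos : ∀ x y, 0 < V x y) :
    Zpar (polarPlus W) (polarPlus V) = Zpar W V ^ 2 := by
  have hV : ∀ x y, 0 ≤ V x y := fun x y => (hVpos x y).le
  rw [Zpar_eq_half_add, Zpar_eq_half_add, ZparFalse_polarPlus W hV, ZparTrue_polarPlus W hV]
  ring

/-- `Z(W⁺, V⁺) = Z(W, V)²`. -/
theorem Zpar_polarPlus {Y : Type*} [Fintype Y] (W V : Bool → Y → ℝ)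
    (hW : IsBDMC W) (hV : IsBDMC V) (hVpos : ∀ x y, 0 < V x y) :
    Zpar (polarPlus W) (polarPlus V) = Zpar W V ^ 2 :=
  Zpar_polarPlus_general W V hVpos
end

section
/- Let W and V be B-DMCs with the same finite output alphabet Y, and assume V(y|x) > 0 for all y ∈ Y and x ∈ {0,1}. Then the minus polar transform satisfies Z(W⁻, V⁻) ≤ 2·Z(W,V). -/
open Finset
open scoped Classical

/-!
Write `√ℓ_x(y) = √(V(y|¬x)/V(y|x))`, so that `Z(W,V)` is the `W`-average of `√ℓ`. For the minus
transform, an input pair `(x₁, x₂)` with `u = x₁ ⊕ x₂` gives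
`ℓ⁻_u(y₁y₂) = (a₁'a₂ + a₁a₂')/(a₁a₂ + a₁'a₂') ≤ a₁'/a₁ + a₂'/a₂ = ℓ_{x₁}(y₁) + ℓ_{x₂}(y₂)`
(with `a_i = V(y_i|x_i)`, `a_i' = V(y_i|¬x_i)`), obtained by dropping `a₁'a₂'` from the denominator.
Subadditivity of `√` and averaging over `(x₁, x₂, y₁, y₂)` then gives `Z(W⁻,V⁻) ≤ 2 Z(W,V)`.
-/

theorem Real.sqrt_add_le_sqrt_add_sqrt (a b : ℝ) : √(a + b) ≤ √a + √b := by
  rcases lt_or_ge a 0 with ha | ha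
  · rw [Real.sqrt_eq_zero_of_nonpos ha.le, zero_add]
    exact Real.sqrt_le_sqrt (by linarith)
  rcases lt_or_ge b 0 with hb | hb
  · rw [Real.sqrt_eq_zero_of_nonpos hb.le, add_zero]
    exact Real.sqrt_le_sqrt (by linarith)
  rw [Real.sqrt_le_left (by positivity)]
  nlinarith [Real.sq_sqrt ha, Real.sq_sqrt hb, Real.sqrt_nonneg a, Real.sqrt_nonneg b]

theorem Real.sqrt_cross_div_le {a a' b b' : ℝ} (ha : 0 < a) (hb : 0 < b) (ha' : 0 ≤ a')
    (hb' : 0 ≤ b') :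
    √((a' * b + a * b') / (a * b + a' * b')) ≤ √(a' / a) + √(b' / b) := by
  have hratio : (a' * b + a * b') / (a * b + a' * b') ≤ a' / a + b' / b := calc
    _ ≤ (a' * b + a * b') / (a * b) := by gcongr; nlinarith
    _ = a' / a + b' / b := by field_simp
  exact (Real.sqrt_le_sqrt hratio).trans (Real.sqrt_add_le_sqrt_add_sqrt _ _)

theorem sum_mul_sum_mul_add {α β : Type*} [Fintype α] [Fintype β] {p : α → ℝ} {q : β → ℝ}
    (hp : ∑ a, p a = 1) (hq : ∑ b, q b = 1) (f : α → ℝ) (g : β → ℝ) :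
    ∑ a, ∑ b, p a * q b * (f a + g b) = ∑ a, p a * f a + ∑ b, q b * g b := by
  simp only [mul_add, Finset.sum_add_distrib]
  simp only [mul_right_comm (p _) (q _) (f _), mul_assoc (p _) (q _) (g _), ← Finset.sum_mul,
    ← Finset.mul_sum, hq, hp, one_mul, mul_one]

noncomputable def sqrtLR {Y : Type*} (V : Bool → Y → ℝ) (x : Bool) (y : Y) : ℝ :=
  √(V (!x) y / V x y)

theorem Zpar_eq_sum_sqrtLR {Y : Type*} [Fintype Y] (W V : Bool → Y → ℝ) :
    Zpar W V = 1 / 2 * ∑ x, ∑ y, W x y * sqrtLR V x y := by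
  simp only [Zpar, sqrtLR, LR, Fintype.sum_bool, Bool.not_true, Bool.not_false, one_div, inv_div]
  ring

theorem polarMinus_xor_apply {Y : Type*} (V : Bool → Y → ℝ) (x₁ x₂ : Bool) (y₁ y₂ : Y) :
    polarMinus V (Bool.xor x₁ x₂) (y₁, y₂)
      = 1 / 2 * (V x₁ y₁ * V x₂ y₂ + V (!x₁) y₁ * V (!x₂) y₂) := by
  cases x₁ <;> cases x₂ <;> simp [polarMinus] <;> ring

theorem polarMinus_not_xor_apply {Y : Type*} (V : Bool → Y → ℝ) (x₁ x₂ : Bool) (y₁ y₂ : Y) :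
    polarMinus V (!Bool.xor x₁ x₂) (y₁, y₂)
      = 1 / 2 * (V (!x₁) y₁ * V x₂ y₂ + V x₁ y₁ * V (!x₂) y₂) := by
  cases x₁ <;> cases x₂ <;> simp [polarMinus] <;> ring

theorem sqrtLR_polarMinus_le {Y : Type*} {V : Bool → Y → ℝ} (hV : ∀ x y, 0 < V x y)
    (x₁ x₂ : Bool) (y₁ y₂ : Y) :
    sqrtLR (polarMinus V) (Bool.xor x₁ x₂) (y₁, y₂) ≤ sqrtLR V x₁ y₁ + sqrtLR V x₂ y₂ := by
  rw [sqrtLR, polarMinus_not_xor_apply, polarMinus_xor_apply,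
    mul_div_mul_left _ _ (by norm_num)]
  exact Real.sqrt_cross_div_le (hV _ _) (hV _ _) (hV _ _).le (hV _ _).le

theorem Zpar_polarMinus_eq {Y : Type*} [Fintype Y] (W : Bool → Y → ℝ) (V : Bool → Y × Y → ℝ) :
    Zpar (polarMinus W) V = 1 / 4 * ∑ x₁, ∑ x₂, ∑ y₁, ∑ y₂,
      W x₁ y₁ * W x₂ y₂ * sqrtLR V (Bool.xor x₁ x₂) (y₁, y₂) := by
  simp only [Zpar_eq_sum_sqrtLR, polarMinus, Fintype.sum_prod_type, Fintype.sum_bool,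
    Finset.mul_sum, ← Finset.sum_add_distrib, Bool.xor_false, Bool.xor_true, Bool.not_false,
    Bool.not_true]
  refine Finset.sum_congr rfl fun y₁ _ => Finset.sum_congr rfl fun y₂ _ => ?_
  ring

theorem Zpar_polarMinus_le_general {Y : Type*} [Fintype Y] (W V : Bool → Y → ℝ)
    (hW : IsBDMC W) (hVpos : ∀ x y, 0 < V x y) :
    Zpar (polarMinus W) (polarMinus V) ≤ 2 * Zpar W V := by
  obtain ⟨hW_nonneg, hW_sum⟩ := hW
  rw [Zpar_polarMinus_eq, Zpar_eq_sum_sqrtLR]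
  calc
    _ ≤ 1 / 4 * ∑ x₁, ∑ x₂, ∑ y₁, ∑ y₂,
          W x₁ y₁ * W x₂ y₂ * (sqrtLR V x₁ y₁ + sqrtLR V x₂ y₂) := by
      gcongr with x₁ _ x₂ _ y₁ _ y₂ _
      · exact mul_nonneg (hW_nonneg _ _) (hW_nonneg _ _)
      · exact sqrtLR_polarMinus_le hVpos x₁ x₂ y₁ y₂
    _ = 1 / 4 * ∑ x₁, ∑ x₂, (∑ y, W x₁ y * sqrtLR V x₁ y + ∑ y, W x₂ y * sqrtLR V x₂ y) := by
      simp only [sum_mul_sum_mul_add (hW_sum _) (hW_sum _)]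
    _ = 2 * (1 / 2 * ∑ x, ∑ y, W x y * sqrtLR V x y) := by
      simp only [Fintype.sum_bool]
      ring

/-- `Z(W⁻, V⁻) ≤ 2 Z(W, V)`. -/
theorem Zpar_polarMinus_le {Y : Type*} [Fintype Y] (W V : Bool → Y → ℝ)
    (hW : IsBDMC W) (hV : IsBDMC V) (hVpos : ∀ x y, 0 < V x y) :
    Zpar (polarMinus W) (polarMinus V) ≤ 2 * Zpar W V :=
  Zpar_polarMinus_le_general W V hW hVpos
end

section
/- For nonnegative reals x and y, √((x+y)/(1+xy)) ≤ √x + √y. -/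
open Finset
open scoped Classical

/-- For nonnegative reals, `√((x+y)/(1+xy)) ≤ √x + √y`. -/
theorem sqrt_div_ineq_add (x y : ℝ) (hx : 0 ≤ x) (hy : 0 ≤ y) :
    Real.sqrt ((x + y) / (1 + x * y)) ≤ Real.sqrt x + Real.sqrt y :=
  calc √((x + y) / (1 + x * y))
      ≤ √(x + y) := Real.sqrt_le_sqrt <|
        div_le_self (add_nonneg hx hy) (le_add_of_nonneg_right (mul_nonneg hx hy))
    _ ≤ √x + √y := Real.sqrt_add_le_sqrt_add_sqrt x y
end

section
/- For x > 0 and y ≥ 0, √((1+xy)/(x+y)) ≤ √(1/x) + √y. -/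
open Finset
open scoped Classical

/-- For `x > 0` and `y ≥ 0`, `√((1+xy)/(x+y)) ≤ √(1/x) + √y`. -/
theorem sqrt_div_ineq_inv (x y : ℝ) (hx : 0 < x) (hy : 0 ≤ y) :
    Real.sqrt ((1 + x * y) / (x + y)) ≤ Real.sqrt (1 / x) + Real.sqrt y := by
  have hdiv : (1 + x * y) / (x + y) ≤ 1 / x + y :=
    calc (1 + x * y) / (x + y) ≤ (1 + x * y) / x :=
          div_le_div_of_nonneg_left (by positivity) hx (le_add_of_nonneg_right hy)
      _ = 1 / x + y := by field_simp
  calc Real.sqrt ((1 + x * y) / (x + y)) ≤ Real.sqrt (1 / x + y) := Real.sqrt_le_sqrt hdiv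
    _ ≤ Real.sqrt (1 / x) + Real.sqrt y := Real.sqrt_add_le_sqrt_add_sqrt _ _
end

section
/- Let Δ₁ and Δ₂ be independent random variables on a probability space, each taking values in [−1,1], with E[√|Δ₁|] = μ₁ and E[√|Δ₂|] = μ₂. Then E[√|(Δ₁+Δ₂)/(1+Δ₁Δ₂)|] ≤ μ₁ + μ₂ − μ₁μ₂ and E[√|(Δ₁−Δ₂)/(1−Δ₁Δ₂)|] ≤ μ₁ + μ₂ − μ₁μ₂, where division by zero is interpreted with the convention that x/0 = 0. -/
open Finset
open scoped Classical

/-!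
For `a, b ∈ [-1, 1]`, with `s = √|a|` and `t = √|b|`, pointwise
`√|(a + b) / (1 + a b)| ≤ s + t - s t`: replacing `a, b` by `|a|, |b|` can only increase the
left side, and for nonnegative arguments the bound is the polynomial inequality
`s² + t² ≤ (s + t - s t)² (1 + s² t²)`. By independence the right side has expectation
`μ₁ + μ₂ - μ₁ μ₂`; the difference case is the sum case for `-Δ₂`.
-/
open MeasureTheory ProbabilityTheory

theorem sq_add_sq_le_sq_add_sub_mul_mul_one_add {s t : ℝ} (hs₀ : 0 ≤ s) (hs₁ : s ≤ 1)
    (ht₀ : 0 ≤ t) (ht₁ : t ≤ 1) :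
    s ^ 2 + t ^ 2 ≤ (s + t - s * t) ^ 2 * (1 + s ^ 2 * t ^ 2) := by
  set u := 1 - s
  set v := 1 - t
  have hu : 0 ≤ u := sub_nonneg.2 hs₁
  have hv : 0 ≤ v := sub_nonneg.2 ht₁
  have hQ : 0 ≤ (u + v) * (2 - u * v) + u * v * (u * v - 1) := by
    nlinarith [mul_nonneg hu hv, mul_le_mul hs₁ ht₁ ht₀ zero_le_one]
  calc s ^ 2 + t ^ 2
      ≤ s ^ 2 + t ^ 2 + s * t * (u * v) * ((u + v) * (2 - u * v) + u * v * (u * v - 1)) :=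
        le_add_of_nonneg_right (by positivity)
    _ = (s + t - s * t) ^ 2 * (1 + s ^ 2 * t ^ 2) := by ring

theorem abs_add_div_one_add_mul_le {a b : ℝ} (ha : |a| ≤ 1) (hb : |b| ≤ 1) :
    |(a + b) / (1 + a * b)| ≤ (|a| + |b|) / (1 + |a| * |b|) := by
  have hden : 0 ≤ 1 + a * b := by
    nlinarith [abs_mul a b, neg_abs_le (a * b), abs_nonneg a, abs_nonneg b]
  rcases hden.eq_or_lt with h | h
  · rw [← h, div_zero, abs_zero]
    positivity
  rw [abs_div, abs_of_pos h, div_le_div_iff₀ h (by positivity)]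
  have ha₂ : 0 ≤ 1 - a ^ 2 := by nlinarith [sq_abs a, abs_nonneg a]
  have hb₂ : 0 ≤ 1 - b ^ 2 := by nlinarith [sq_abs b, abs_nonneg b]
  rcases abs_cases a with ⟨ha', _⟩ | ⟨ha', _⟩ <;> rcases abs_cases b with ⟨hb', _⟩ | ⟨hb', _⟩ <;>
    rcases abs_cases (a + b) with ⟨hab, _⟩ | ⟨hab, _⟩ <;> rw [ha', hb', hab] <;> nlinarith

theorem sqrt_abs_add_div_one_add_mul_le {a b : ℝ} (ha : |a| ≤ 1) (hb : |b| ≤ 1) :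
    √|(a + b) / (1 + a * b)| ≤ √|a| + √|b| - √|a| * √|b| := by
  set s := √|a|
  set t := √|b|
  have hs₀ : 0 ≤ s := Real.sqrt_nonneg _
  have ht₀ : 0 ≤ t := Real.sqrt_nonneg _
  have hs₁ : s ≤ 1 := Real.sqrt_le_one.2 ha
  have ht₁ : t ≤ 1 := Real.sqrt_le_one.2 hb
  have hsa : |a| = s ^ 2 := (Real.sq_sqrt (abs_nonneg a)).symm
  have htb : |b| = t ^ 2 := (Real.sq_sqrt (abs_nonneg b)).symm
  refine Real.sqrt_le_iff.2 ⟨by nlinarith, (abs_add_div_one_add_mul_le ha hb).trans ?_⟩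
  rw [hsa, htb, div_le_iff₀ (by positivity)]
  exact sq_add_sq_le_sq_add_sub_mul_mul_one_add hs₀ hs₁ ht₀ ht₁

theorem sqrt_abs_sub_div_one_sub_mul_le {a b : ℝ} (ha : |a| ≤ 1) (hb : |b| ≤ 1) :
    √|(a - b) / (1 - a * b)| ≤ √|a| + √|b| - √|a| * √|b| := by
  simpa [sub_eq_add_neg] using sqrt_abs_add_div_one_add_mul_le ha ((abs_neg b).trans_le hb)

theorem ProbabilityTheory.IndepFun.integral_add_sub_mul {Ω : Type*} [MeasurableSpace Ω]
    {μ : Measure Ω} {X Y : Ω → ℝ} (hXY : X ⟂ᵢ[μ] Y) (hX : Integrable X μ)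
    (hY : Integrable Y μ) :
    ∫ ω, (X ω + Y ω - X ω * Y ω) ∂μ =
      (∫ ω, X ω ∂μ) + (∫ ω, Y ω ∂μ) - (∫ ω, X ω ∂μ) * ∫ ω, Y ω ∂μ := by
  have hXY' : Integrable (fun ω => X ω * Y ω) μ := hXY.integrable_mul hX hY
  rw [integral_sub (f := fun ω => X ω + Y ω) (hX.add hY) hXY', integral_add hX hY,
    hXY.integral_fun_mul_eq_mul_integral hX.1 hY.1]

theorem integrable_sqrt_abs_of_abs_le_one {Ω : Type*} [MeasurableSpace Ω] {μ : Measure Ω}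
    [IsFiniteMeasure μ] {X : Ω → ℝ} (hX : Measurable X) (h : ∀ ω, |X ω| ≤ 1) :
    Integrable (fun ω => √|X ω|) μ :=
  Integrable.of_bound (by fun_prop) 1 <| ae_of_all _ fun ω => by
    rw [Real.norm_of_nonneg (Real.sqrt_nonneg _)]
    exact Real.sqrt_le_one.2 (h ω)

open MeasureTheory in
/-- For independent `[-1,1]`-valued random variables `Δ₁, Δ₂` with
`E[√|Δᵢ|] = μᵢ`, both `E[√|(Δ₁+Δ₂)/(1+Δ₁Δ₂)|]` and `E[√|(Δ₁−Δ₂)/(1−Δ₁Δ₂)|]` are at most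
`μ₁ + μ₂ − μ₁ μ₂` (division by zero interpreted as `0`). -/
theorem expectation_sqrt_abs_polar_combination_le
    {Ω : Type*} [MeasurableSpace Ω] (μ : Measure Ω) [IsProbabilityMeasure μ]
    (Δ₁ Δ₂ : Ω → ℝ) (hm₁ : Measurable Δ₁) (hm₂ : Measurable Δ₂)
    (hb₁ : ∀ ω, Δ₁ ω ∈ Set.Icc (-1 : ℝ) 1) (hb₂ : ∀ ω, Δ₂ ω ∈ Set.Icc (-1 : ℝ) 1)
    (hindep : ProbabilityTheory.IndepFun Δ₁ Δ₂ μ)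
    (μ₁ μ₂ : ℝ)
    (hμ₁ : μ₁ = ∫ ω, Real.sqrt |Δ₁ ω| ∂μ)
    (hμ₂ : μ₂ = ∫ ω, Real.sqrt |Δ₂ ω| ∂μ) :
    (∫ ω, Real.sqrt |(Δ₁ ω + Δ₂ ω) / (1 + Δ₁ ω * Δ₂ ω)| ∂μ ≤ μ₁ + μ₂ - μ₁ * μ₂) ∧
    (∫ ω, Real.sqrt |(Δ₁ ω - Δ₂ ω) / (1 - Δ₁ ω * Δ₂ ω)| ∂μ ≤ μ₁ + μ₂ - μ₁ * μ₂) := by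
  have h₁ : ∀ ω, |Δ₁ ω| ≤ 1 := fun ω => abs_le.2 (hb₁ ω)
  have h₂ : ∀ ω, |Δ₂ ω| ≤ 1 := fun ω => abs_le.2 (hb₂ ω)
  have hi₁ := integrable_sqrt_abs_of_abs_le_one (μ := μ) hm₁ h₁
  have hi₂ := integrable_sqrt_abs_of_abs_le_one (μ := μ) hm₂ h₂
  have hφ : Measurable fun x : ℝ => √|x| := by fun_prop
  have hindep' : (fun ω => √|Δ₁ ω|) ⟂ᵢ[μ] fun ω => √|Δ₂ ω| := hindep.comp hφ hφ
  have hbound : ∫ ω, (√|Δ₁ ω| + √|Δ₂ ω| - √|Δ₁ ω| * √|Δ₂ ω|) ∂μ = μ₁ + μ₂ - μ₁ * μ₂ := by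
    rw [hμ₁, hμ₂]
    exact hindep'.integral_add_sub_mul hi₁ hi₂
  have dominated : ∀ f : Ω → ℝ, (∀ ω, √|f ω| ≤ √|Δ₁ ω| + √|Δ₂ ω| - √|Δ₁ ω| * √|Δ₂ ω|) →
      ∫ ω, √|f ω| ∂μ ≤ μ₁ + μ₂ - μ₁ * μ₂ := fun f hf =>
    hbound ▸ integral_mono_of_nonneg (ae_of_all _ fun _ => Real.sqrt_nonneg _)
      ((hi₁.add hi₂).sub (hindep'.integrable_mul hi₁ hi₂)) (ae_of_all _ hf)
  exact ⟨dominated _ fun ω => sqrt_abs_add_div_one_add_mul_le (h₁ ω) (h₂ ω),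
    dominated _ fun ω => sqrt_abs_sub_div_one_sub_mul_le (h₁ ω) (h₂ ω)⟩
end

section
/- For all real a, b in the interval [0,1], √(|a²−b²|/(1−a²b²)) ≤ √((a²+b²)/(1+a²b²)) ≤ a + b − ab, where in the degenerate case ab = 1 (i.e., a = b = 1) the first fraction 0/0 is interpreted as 0. -/
open Finset
open scoped Classical

/-
Substituting `x = a²`, `y = b²`, both fractions are the hyperbolic-tangent subtraction and
addition formulas, and for `x ≥ y` the first bound amounts to
`(x + y)(1 - xy) - (x - y)(1 + xy) = 2y(1 - x²) ≥ 0`.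
For the second bound write `s = a + b - ab`, so that `1 - s = (1 - a)(1 - b)`; then
`s²(1 + a²b²) - (a² + b²) = (1 - a)(1 - b) · ab · (2 - (1 + s)ab)`, and `s, ab ≤ 1`.
-/

theorem abs_sub_div_one_sub_mul_le_add_div_one_add_mul {x y : ℝ} (hx0 : 0 ≤ x) (hx1 : x ≤ 1)
    (hy0 : 0 ≤ y) (hy1 : y ≤ 1) :
    |x - y| / (1 - x * y) ≤ (x + y) / (1 + x * y) := by
  rcases (mul_le_one₀ hx1 hy0 hy1).eq_or_lt with hxy | hxy
  · rw [hxy, sub_self, div_zero]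
    positivity
  rw [div_le_div_iff₀ (by linarith) (by positivity)]
  rcases abs_cases (x - y) with ⟨habs, _⟩ | ⟨habs, _⟩ <;> rw [habs]
  · nlinarith [mul_nonneg hy0 (sub_nonneg.2 (mul_le_one₀ hx1 hx0 hx1))]
  · nlinarith [mul_nonneg hx0 (sub_nonneg.2 (mul_le_one₀ hy1 hy0 hy1))]

theorem sq_add_sq_div_one_add_sq_mul_sq_le {a b : ℝ} (ha0 : 0 ≤ a) (ha1 : a ≤ 1) (hb0 : 0 ≤ b)
    (hb1 : b ≤ 1) :
    (a ^ 2 + b ^ 2) / (1 + a ^ 2 * b ^ 2) ≤ (a + b - a * b) ^ 2 := by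
  set s := a + b - a * b with hs
  have hab : 0 ≤ a * b := mul_nonneg ha0 hb0
  have hab1 : a * b ≤ 1 := mul_le_one₀ ha1 hb0 hb1
  have key : s ^ 2 * (1 + a ^ 2 * b ^ 2) - (a ^ 2 + b ^ 2)
      = (1 - a) * (1 - b) * (a * b) * (2 - (1 + s) * (a * b)) := by
    rw [hs]; ring
  have hs1 : s ≤ 1 := by nlinarith
  have hfactor : 0 ≤ (1 - a) * (1 - b) * (a * b) * (2 - (1 + s) * (a * b)) :=
    mul_nonneg (mul_nonneg (mul_nonneg (sub_nonneg.2 ha1) (sub_nonneg.2 hb1)) hab)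
      (by nlinarith)
  rw [div_le_iff₀ (by positivity)]
  linarith

/-- For `a, b ∈ [0,1]`,
`√(|a²−b²|/(1−a²b²)) ≤ √((a²+b²)/(1+a²b²)) ≤ a + b − ab`
(with the Lean convention `0/0 = 0` handling the degenerate case `a = b = 1`). -/
theorem sqrt_abs_sq_div_le (a b : ℝ) (ha : a ∈ Set.Icc (0 : ℝ) 1)
    (hb : b ∈ Set.Icc (0 : ℝ) 1) :
    Real.sqrt (|a ^ 2 - b ^ 2| / (1 - a ^ 2 * b ^ 2))
        ≤ Real.sqrt ((a ^ 2 + b ^ 2) / (1 + a ^ 2 * b ^ 2)) ∧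
    Real.sqrt ((a ^ 2 + b ^ 2) / (1 + a ^ 2 * b ^ 2)) ≤ a + b - a * b := by
  obtain ⟨ha0, ha1⟩ := ha
  obtain ⟨hb0, hb1⟩ := hb
  refine ⟨Real.sqrt_le_sqrt ?_, (Real.sqrt_le_left (by nlinarith)).2
    (sq_add_sq_div_one_add_sq_mul_sq_le ha0 ha1 hb0 hb1)⟩
  exact abs_sub_div_one_sub_mul_le_add_div_one_add_mul (sq_nonneg a) (pow_le_one₀ ha0 ha1)
    (sq_nonneg b) (pow_le_one₀ hb0 hb1)
end

section
/- Let W and V be B-DMCs with the same finite output alphabet Y, and assume V(y|x) > 0 for all y ∈ Y and x ∈ {0,1}. Then I(W⁺, V⁺) = (1/4)∑_{y₁,y₂∈Y} [ W(y₁|0)W(y₂|0)·log₂(1 + (Δ_V(y₁)+Δ_V(y₂))/(1+Δ_V(y₁)Δ_V(y₂))) + W(y₁|0)W(y₂|1)·log₂(1 + (Δ_V(y₁)−Δ_V(y₂))/(1−Δ_V(y₁)Δ_V(y₂))) + W(y₁|1)W(y₂|0)·log₂(1 − (Δ_V(y₁)−Δ_V(y₂))/(1−Δ_V(y₁)Δ_V(y₂)))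 + W(y₁|1)W(y₂|1)·log₂(1 − (Δ_V(y₁)+Δ_V(y₂))/(1+Δ_V(y₁)Δ_V(y₂))) ]. -/
open Finset
open scoped Classical

/-!
Since `V(0|y) / q_V(y) = 1 + Δ_V(y)` and `V(1|y) / q_V(y) = 1 - Δ_V(y)`, the mismatched mutual
information is an average of `log₂ (1 ± Δ_V)`. For the plus transform, `Δ_{V⁺}(y₁y₂u₁)` is
`(Δ₁ + Δ₂)/(1 + Δ₁Δ₂)` for `u₁ = 0` and `(Δ₂ - Δ₁)/(1 - Δ₁Δ₂)` for `u₁ = 1`, where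
`Δᵢ = Δ_V(yᵢ)`: writing `Δ = tanh (L/2)` for the log-likelihood ratio `L`, this is the `tanh`
addition formula, as the plus transform adds (or, for `u₁ = 1`, subtracts) log-likelihood ratios.
Expanding the four values of `(u₁, u₂)` gives the four terms of the formula.
-/

theorem add_div_one_add_mul_eq {K : Type*} [Field K] [CharZero K] (x y : K) :
    (x + y) / (1 + x * y) =
      ((1 + x) * (1 + y) - (1 - x) * (1 - y)) / ((1 + x) * (1 + y) + (1 - x) * (1 - y)) := by
  rw [show (1 + x) * (1 + y) - (1 - x) * (1 - y) = 2 * (x + y) by ring,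
    show (1 + x) * (1 + y) + (1 - x) * (1 - y) = 2 * (1 + x * y) by ring,
    mul_div_mul_left _ _ two_ne_zero]

section Δch

variable {Y : Type*}

theorem div_qOut_false_eq_one_add_Δch {V : Bool → Y → ℝ} {y : Y}
    (hV : V false y + V true y ≠ 0) : V false y / qOut V y = 1 + Δch V y := by
  rw [qOut, Δch]
  field_simp
  ring

theorem div_qOut_true_eq_one_sub_Δch {V : Bool → Y → ℝ} {y : Y}
    (hV : V false y + V true y ≠ 0) : V true y / qOut V y = 1 - Δch V y := by
  rw [qOut, Δch]
  field_simp
  ring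

theorem Imm_eq_sum_logb_Δch [Fintype Y] (W V : Bool → Y → ℝ)
    (hV : ∀ y, V false y + V true y ≠ 0) :
    Imm W V = (1/2) * ∑ y, (W false y * Real.logb 2 (1 + Δch V y)
      + W true y * Real.logb 2 (1 - Δch V y)) := by
  simp only [Imm, Fintype.sum_bool, ← Finset.sum_add_distrib,
    div_qOut_false_eq_one_add_Δch (hV _), div_qOut_true_eq_one_sub_Δch (hV _), add_comm]

theorem polarPlus_pos {V : Bool → Y → ℝ} (hV : ∀ x y, 0 < V x y) (u : Bool) (p : Y × Y × Bool) :
    0 < polarPlus V u p := by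
  have := hV (p.2.2.xor u) p.1
  have := hV u p.2.1
  unfold polarPlus
  positivity

theorem Δch_polarPlus_false {V : Bool → Y → ℝ} (hV : ∀ x y, 0 < V x y) (y₁ y₂ : Y) :
    Δch (polarPlus V) (y₁, y₂, false) =
      (Δch V y₁ + Δch V y₂) / (1 + Δch V y₁ * Δch V y₂) := by
  have := hV false y₁; have := hV true y₁; have := hV false y₂; have := hV true y₂
  rw [add_div_one_add_mul_eq, ← div_qOut_false_eq_one_add_Δch (by positivity),
    ← div_qOut_false_eq_one_add_Δch (by positivity), ← div_qOut_true_eq_one_sub_Δch (by positivity),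
    ← div_qOut_true_eq_one_sub_Δch (by positivity)]
  simp only [Δch, polarPlus, qOut, Bool.false_xor, Bool.xor_false]
  field_simp

theorem Δch_polarPlus_true {V : Bool → Y → ℝ} (hV : ∀ x y, 0 < V x y) (y₁ y₂ : Y) :
    Δch (polarPlus V) (y₁, y₂, true) =
      -((Δch V y₁ - Δch V y₂) / (1 - Δch V y₁ * Δch V y₂)) := by
  have := hV false y₁; have := hV true y₁; have := hV false y₂; have := hV true y₂
  rw [show -((Δch V y₁ - Δch V y₂) / (1 - Δch V y₁ * Δch V y₂))
      = (-Δch V y₁ + Δch V y₂) / (1 + -Δch V y₁ * Δch V y₂) by ring, add_div_one_add_mul_eq,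
    ← sub_eq_add_neg, sub_neg_eq_add, ← div_qOut_false_eq_one_add_Δch (by positivity),
    ← div_qOut_false_eq_one_add_Δch (by positivity), ← div_qOut_true_eq_one_sub_Δch (by positivity),
    ← div_qOut_true_eq_one_sub_Δch (by positivity)]
  simp only [Δch, polarPlus, qOut, Bool.true_xor, Bool.not_false, Bool.not_true]
  field_simp

end Δch

theorem Imm_polarPlus_eq_general {Y : Type*} [Fintype Y] (W V : Bool → Y → ℝ)
    (hVpos : ∀ x y, 0 < V x y) :
    Imm (polarPlus W) (polarPlus V) =
      (1/4) * ∑ y₁ : Y, ∑ y₂ : Y,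
        (W false y₁ * W false y₂
            * Real.logb 2 (1 + (Δch V y₁ + Δch V y₂) / (1 + Δch V y₁ * Δch V y₂))
         + W false y₁ * W true y₂
            * Real.logb 2 (1 + (Δch V y₁ - Δch V y₂) / (1 - Δch V y₁ * Δch V y₂))
         + W true y₁ * W false y₂
            * Real.logb 2 (1 - (Δch V y₁ - Δch V y₂) / (1 - Δch V y₁ * Δch V y₂))
         + W true y₁ * W true y₂
            * Real.logb 2 (1 - (Δch V y₁ + Δch V y₂) / (1 + Δch V y₁ * Δch V y₂))) := by
  have hsum_ne_zero (p : Y × Y × Bool) : polarPlus V false p + polarPlus V true p ≠ 0 :=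
    (add_pos (polarPlus_pos hVpos _ p) (polarPlus_pos hVpos _ p)).ne'
  rw [Imm_eq_sum_logb_Δch _ _ hsum_ne_zero]
  simp only [Fintype.sum_prod_type, Fintype.sum_bool, Δch_polarPlus_false hVpos,
    Δch_polarPlus_true hVpos, ← sub_eq_add_neg, sub_neg_eq_add, polarPlus, Bool.xor_false,
    Bool.xor_true, Bool.not_false, Bool.not_true, Finset.mul_sum]
  refine Finset.sum_congr rfl fun y₁ _ => Finset.sum_congr rfl fun y₂ _ => ?_
  ring

/-- Explicit formula for `I(W⁺, V⁺)` in terms of `Δ_V`. -/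
theorem Imm_polarPlus_eq {Y : Type*} [Fintype Y] (W V : Bool → Y → ℝ)
    (hW : IsBDMC W) (hV : IsBDMC V) (hVpos : ∀ x y, 0 < V x y) :
    Imm (polarPlus W) (polarPlus V) =
      (1/4) * ∑ y₁ : Y, ∑ y₂ : Y,
        (W false y₁ * W false y₂
            * Real.logb 2 (1 + (Δch V y₁ + Δch V y₂) / (1 + Δch V y₁ * Δch V y₂))
         + W false y₁ * W true y₂
            * Real.logb 2 (1 + (Δch V y₁ - Δch V y₂) / (1 - Δch V y₁ * Δch V y₂))
         + W true y₁ * W false y₂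
            * Real.logb 2 (1 - (Δch V y₁ - Δch V y₂) / (1 - Δch V y₁ * Δch V y₂))
         + W true y₁ * W true y₂
            * Real.logb 2 (1 - (Δch V y₁ + Δch V y₂) / (1 + Δch V y₁ * Δch V y₂))) :=
  Imm_polarPlus_eq_general W V hVpos
end
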